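/- The simplicial boundary operator is bounded with respect to the λ-natural norms: for integers 0 < n ≤ m and real λ with n ≤ λ ≤ m there is a constant C > 0 such that |∂A|^♮_λ ≤ C·|A|^♮_λ for every simplicial n-chain A in ℝ^m (the left side being the λ-natural norm for (n−1)-chains); consequently ∂ extends to a continuous linear map ∂ : X_{n,λ}(ℝ^m) → X_{n−1,λ}(ℝ^m). -/

import Mathlib

open MeasureTheory Filter Metric Set

noncomputable section

/-- Euclidean `m`-space `ℝ^m`. -/
abbrev Euc (m : ℕ) : Type := EuclideanSpace ℝ (Fin m)

/-- An oriented `n`-simplex in `ℝ^m`, recorded by its ordered list of `n+1` vertices. -/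
abbrev Splx (n m : ℕ) : Type := Fin (n + 1) → Euc m

/-- Formal sums `Σ aᵢ σᵢ` of oriented `n`-simplices in `ℝ^m` with real coefficients. -/
abbrev FormalSum (n m : ℕ) : Type := Splx n m →₀ ℝ

/-- Unbundled (raw) `n`-forms on `ℝ^m`: a scalar depending on a point and `n` vectors. -/
abbrev RawForm (n m : ℕ) : Type := Euc m → (Fin n → Euc m) → ℝ

/-- Continuous multilinear maps in `n` variables on `ℝ^m` (the value space of forms). -/
abbrev CMM (n m : ℕ) : Type := ContinuousMultilinearMap ℝ (fun _ : Fin n => Euc m) ℝ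

/-- A multilinear map is alternating. -/
def IsAlt {n m : ℕ} (g : CMM n m) : Prop :=
  ∀ (v : Fin n → Euc m) (i j : Fin n), i ≠ j → v i = v j → g v = 0

/-- A differential `n`-form on `ℝ^m`: an alternating-multilinear-map valued function. -/
def Form (n m : ℕ) : Type := {ω : Euc m → CMM n m // ∀ x, IsAlt (ω x)}

/-- The raw form underlying a differential form. -/
def Form.raw {n m : ℕ} (ω : Form n m) : RawForm n m := fun x v => ω.1 x v

/-- The standard `n`-simplex as a subset of `ℝ^n`. -/
def stdSimplexSet (n : ℕ) : Set (Fin n → ℝ) := {t | (∀ i, 0 ≤ t i) ∧ ∑ i, t i ≤ 1}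

/-- The (Riemann/Lebesgue) integral of a raw `n`-form over an oriented `n`-simplex,
computed through the affine parametrization by the standard simplex. -/
def simplexIntegral {n m : ℕ} (σ : Splx n m) (ω : RawForm n m) : ℝ :=
  ∫ t in stdSimplexSet n,
    ω (σ 0 + ∑ i : Fin n, t i • (σ i.succ - σ 0)) (fun i => σ i.succ - σ 0)

/-- Integration of a raw `n`-form over formal sums, as a linear map in the chain. -/
def chainIntegralL (n m : ℕ) (ω : RawForm n m) : FormalSum n m →ₗ[ℝ] ℝ :=
  Finsupp.linearCombination ℝ (fun σ => simplexIntegral σ ω)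

/-- `∫_A ω` for a formal sum `A = Σ aᵢ σᵢ`. -/
def chainIntegral {n m : ℕ} (A : FormalSum n m) (ω : RawForm n m) : ℝ :=
  chainIntegralL n m ω A

/-- The submodule of formal sums that are *null*, i.e. integrate to `0` against every
continuous differential `n`-form.  Two formal sums define the same simplicial chain
(the coefficient functions on each affine `n`-plane agree off a Lebesgue null set)
precisely when their difference is null. -/
def nullChains (n m : ℕ) : Submodule ℝ (FormalSum n m) :=
  ⨅ ω ∈ {ω : Form n m | Continuous ω.1}, LinearMap.ker (chainIntegralL n m ω.raw)

/-- Equivalence of formal sums: they represent the same simplicial chain. -/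
def ChainEquiv {n m : ℕ} (A B : FormalSum n m) : Prop := A - B ∈ nullChains n m

/-- The `n`-dimensional volume of an `n`-simplex in `ℝ^m` (Gram determinant formula). -/
def simplexVolume {n m : ℕ} (σ : Splx n m) : ℝ :=
  Real.sqrt (Matrix.det (Matrix.of fun i j : Fin n =>
    (inner ℝ (σ i.succ - σ 0) (σ j.succ - σ 0) : ℝ))) / (Nat.factorial n : ℝ)

/-- The `n`-element coordinate subsets of `Fin m`, indexing coordinate `n`-planes. -/
def coordPlanes (m k : ℕ) : Finset (Finset (Fin m)) :=
  Finset.univ.filter fun s => s.card = k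

/-- Orthogonal projection of `ℝ^m` onto the coordinate plane indexed by `s`. -/
def coordProj (m : ℕ) (s : Finset (Fin m)) : Euc m → Euc m :=
  fun x => WithLp.toLp 2 (fun i => if i ∈ s then x i else 0)

/-- The projected `λ`-mass `M_{λ,π}(A) = inf { Σ |aᵢ| (Mₙ(π σᵢ))^{λ/n} : Σ aᵢσᵢ ∼ A }`. -/
def projMass (n m : ℕ) (lam : ℝ) (p : Euc m → Euc m) (A : FormalSum n m) : ℝ :=
  sInf { r | ∃ B : FormalSum n m, ChainEquiv B A ∧
    r = ∑ σ ∈ B.support, |B σ| * simplexVolume (p ∘ σ) ^ (lam / n) }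

/-- The `n`-mass of a simplicial `n`-chain. -/
def massNorm (n m : ℕ) (A : FormalSum n m) : ℝ := projMass n m n id A

/-- The simplicial boundary operator on formal sums. -/
def boundaryL (n m : ℕ) : FormalSum (n + 1) m →ₗ[ℝ] FormalSum n m :=
  Finsupp.linearCombination ℝ (fun σ => ∑ i : Fin (n + 2),
    Finsupp.single (fun j => σ (i.succAbove j)) ((-1 : ℝ) ^ (i : ℕ)))

/-- Whitney's flat norm `|A|^♭ = inf { Mₙ(A - ∂C) + M_{n+1}(C) }`. -/
def flatNorm (n m : ℕ) (A : FormalSum n m) : ℝ :=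
  sInf { r | ∃ C : FormalSum (n + 1) m,
    r = massNorm n m (A - boundaryL n m C) + massNorm (n + 1) m C }

/-- Auxiliary recursion (on `fuel`, the integer part of `λ - n`) for the natural norms. -/
def naturalNormAux (m : ℕ) : ℕ → (n : ℕ) → ℝ → FormalSum n m → ℝ
  | 0, n, lam, A => ∑ s ∈ coordPlanes m n, projMass n m lam (coordProj m s) A
  | fuel + 1, n, lam, A =>
    if lam ≤ n then ∑ s ∈ coordPlanes m n, projMass n m lam (coordProj m s) A
    else ∑ s ∈ coordPlanes m n,
      sInf { r | ∃ C : FormalSum (n + 1) m,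
        r = projMass n m n (coordProj m s) (A - boundaryL n m C)
          + naturalNormAux m fuel (n + 1) lam C }

/-- The `λ`-natural norm `|A|^♮_λ` of a simplicial `n`-chain in `ℝ^m`. -/
def naturalNorm (n m : ℕ) (lam : ℝ) (A : FormalSum n m) : ℝ :=
  naturalNormAux m (m - n) n lam A

/-- A sequence of simplicial `n`-chains that is Cauchy in the `λ`-natural norm;
such sequences represent the elements of the completion `X_{n,λ}(ℝ^m)`. -/
def NatCauchy (n m : ℕ) (lam : ℝ) (A : ℕ → FormalSum n m) : Prop :=
  ∀ ε > 0, ∃ N, ∀ j ≥ N, ∀ k ≥ N, naturalNorm n m lam (A j - A k) < ε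

/-- `K` is a `C^s`-(Hölder-)bound for `f`: all derivatives up to order `⌊s⌋` are bounded
by `K` and the top ones are `(s - ⌊s⌋)`-Hölder with constant `K`. -/
def HolderBound {E F : Type} [NormedAddCommGroup E] [NormedSpace ℝ E]
    [NormedAddCommGroup F] [NormedSpace ℝ F] (s : ℝ) (f : E → F) (K : ℝ) : Prop :=
  0 ≤ K ∧ ContDiff ℝ (⌊s⌋₊) f ∧
    (∀ j ≤ ⌊s⌋₊, ∀ x, ‖iteratedFDeriv ℝ j f x‖ ≤ K) ∧
    (∀ x y, ‖iteratedFDeriv ℝ ⌊s⌋₊ f x - iteratedFDeriv ℝ ⌊s⌋₊ f y‖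
      ≤ K * ‖x - y‖ ^ (s - ⌊s⌋₊))

/-- `f` is of class `C^s` (with finite `C^s` norm). -/
def IsCs {E F : Type} [NormedAddCommGroup E] [NormedSpace ℝ E]
    [NormedAddCommGroup F] [NormedSpace ℝ F] (s : ℝ) (f : E → F) : Prop :=
  ∃ K, HolderBound s f K

/-- The `C^s` (Hölder) norm of `f`. -/
def holderNorm {E F : Type} [NormedAddCommGroup E] [NormedSpace ℝ E]
    [NormedAddCommGroup F] [NormedSpace ℝ F] (s : ℝ) (f : E → F) : ℝ :=
  sInf {K | HolderBound s f K}

/-- The exterior derivative of a differential `n`-form, as a raw `(n+1)`-form. -/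
def extDerivRaw {n m : ℕ} (ω : Form n m) : RawForm (n + 1) m :=
  fun x v => ∑ i : Fin (n + 1),
    (-1 : ℝ) ^ (i : ℕ) * fderiv ℝ ω.1 x (v i) (fun j => v (i.succAbove j))


/-!
Since `λ > n - 1`, the `λ`-natural norm of an `(n-1)`-chain `B` is given by the recursive clause:
a sum over the `C(m, n-1)` coordinate planes of infima over partial spanning sets `C`. For
`B = ∂A` the choice `C = A` kills the projected-mass term, so each summand is at most `|A|^♮_λ`
and `|∂A|^♮_λ ≤ C(m, n-1) · |A|^♮_λ`. Linearity of `∂` then carries Cauchy sequences along.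
-/

lemma simplexVolume_nonneg {n m : ℕ} (σ : Splx n m) : 0 ≤ simplexVolume σ :=
  div_nonneg (Real.sqrt_nonneg _) (by positivity)

lemma chainEquiv_refl {n m : ℕ} (A : FormalSum n m) : ChainEquiv A A := by
  simp only [ChainEquiv, sub_self]
  exact Submodule.zero_mem _

section projMass

variable {n m : ℕ} {lam : ℝ} {p : Euc m → Euc m} {A : FormalSum n m}

lemma nonneg_of_mem_projMass_set {r : ℝ}
    (hr : r ∈ {r | ∃ B : FormalSum n m, ChainEquiv B A ∧
      r = ∑ σ ∈ B.support, |B σ| * simplexVolume (p ∘ σ) ^ (lam / n)}) : 0 ≤ r := by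
  obtain ⟨B, -, rfl⟩ := hr
  exact Finset.sum_nonneg fun σ _ => mul_nonneg (abs_nonneg _)
    (Real.rpow_nonneg (simplexVolume_nonneg _) _)

lemma projMass_nonneg : 0 ≤ projMass n m lam p A :=
  Real.sInf_nonneg fun _ => nonneg_of_mem_projMass_set

lemma projMass_zero : projMass n m lam p 0 = 0 :=
  le_antisymm (csInf_le ⟨0, fun _ => nonneg_of_mem_projMass_set⟩ ⟨0, chainEquiv_refl 0, by simp⟩)
    projMass_nonneg

end projMass

lemma naturalNormAux_nonneg (m fuel n : ℕ) (lam : ℝ) (A : FormalSum n m) :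
    0 ≤ naturalNormAux m fuel n lam A := by
  induction fuel generalizing n with
  | zero => exact Finset.sum_nonneg fun _ _ => projMass_nonneg
  | succ fuel ih =>
    rw [naturalNormAux]
    split
    · exact Finset.sum_nonneg fun _ _ => projMass_nonneg
    · refine Finset.sum_nonneg fun _ _ => Real.sInf_nonneg ?_
      rintro r ⟨C, rfl⟩
      exact add_nonneg projMass_nonneg (ih _ _)

lemma card_coordPlanes (m k : ℕ) : (coordPlanes m k).card = m.choose k := by
  have : coordPlanes m k = Finset.powersetCard k Finset.univ := by
    ext s
    simp [coordPlanes]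
  rw [this, Finset.card_powersetCard, Finset.card_univ, Fintype.card_fin]

lemma naturalNormAux_succ_boundary_le {n m : ℕ} {lam : ℝ} (fuel : ℕ) (hlam : (n : ℝ) < lam)
    (A : FormalSum (n + 1) m) :
    naturalNormAux m (fuel + 1) n lam (boundaryL n m A)
      ≤ (m.choose n : ℝ) * naturalNormAux m fuel (n + 1) lam A := by
  rw [naturalNormAux, if_neg hlam.not_ge, ← card_coordPlanes, ← nsmul_eq_mul,
    ← Finset.sum_const]
  refine Finset.sum_le_sum fun s _ => csInf_le ⟨0, ?_⟩ ⟨A, ?_⟩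
  · rintro r ⟨C, rfl⟩
    exact add_nonneg projMass_nonneg (naturalNormAux_nonneg ..)
  · rw [sub_self, projMass_zero, zero_add]

lemma naturalNorm_boundary_le {n m : ℕ} {lam : ℝ} (hnm : n + 1 ≤ m) (hlam : (n : ℝ) < lam)
    (A : FormalSum (n + 1) m) :
    naturalNorm n m lam (boundaryL n m A) ≤ (m.choose n : ℝ) * naturalNorm (n + 1) m lam A := by
  have hfuel : m - n = m - (n + 1) + 1 := by omega
  rw [naturalNorm, hfuel]
  exact naturalNormAux_succ_boundary_le _ hlam A

lemma NatCauchy.map {n k m : ℕ} {lam C : ℝ} {A : ℕ → FormalSum n m}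
    (hA : NatCauchy n m lam A) (f : FormalSum n m →ₗ[ℝ] FormalSum k m) (hC : 0 < C)
    (hf : ∀ B, naturalNorm k m lam (f B) ≤ C * naturalNorm n m lam B) :
    NatCauchy k m lam (fun j => f (A j)) := by
  intro ε hε
  obtain ⟨N, hN⟩ := hA (ε / C) (div_pos hε hC)
  refine ⟨N, fun j hj l hl => ?_⟩
  calc naturalNorm k m lam (f (A j) - f (A l))
      = naturalNorm k m lam (f (A j - A l)) := by rw [map_sub]
    _ ≤ C * naturalNorm n m lam (A j - A l) := hf _
    _ < C * (ε / C) := mul_lt_mul_of_pos_left (hN j hj l hl) hC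
    _ = ε := mul_div_cancel₀ ε hC.ne'

theorem boundary_bounded_naturalNorm_general (nn m : ℕ) (hnm : nn + 1 ≤ m)
    (lam : ℝ) (hl1 : (nn + 1 : ℝ) ≤ lam) :
    (∃ C > 0, ∀ A : FormalSum (nn + 1) m,
      naturalNorm nn m lam (boundaryL nn m A) ≤ C * naturalNorm (nn + 1) m lam A) ∧
    (∀ A : ℕ → FormalSum (nn + 1) m, NatCauchy (nn + 1) m lam A →
      NatCauchy nn m lam (fun k => boundaryL nn m (A k))) := by
  have hlam : (nn : ℝ) < lam := by linarith
  have hC : (0 : ℝ) < m.choose nn := by exact_mod_cast Nat.choose_pos (by omega)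
  have hbound := naturalNorm_boundary_le hnm hlam
  exact ⟨⟨_, hC, hbound⟩, fun A hA => hA.map (boundaryL nn m) hC hbound⟩

/-- The simplicial boundary operator is bounded for the `λ`-natural norms:
for integers `0 < n ≤ m` (written `n = nn + 1`) and real `λ` with `n ≤ λ ≤ m` there is a
constant `C > 0` with `|∂A|^♮_λ ≤ C |A|^♮_λ` for every simplicial `n`-chain `A` in `ℝ^m`
(the left side being the norm on `(n-1)`-chains); consequently `∂` maps `λ`-natural Cauchy
sequences to `λ`-natural Cauchy sequences, i.e. it extends to a continuous linear map
`∂ : X_{n,λ}(ℝ^m) → X_{n-1,λ}(ℝ^m)`. -/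
theorem boundary_bounded_naturalNorm (nn m : ℕ) (hnm : nn + 1 ≤ m)
    (lam : ℝ) (hl1 : (nn + 1 : ℝ) ≤ lam) (hl2 : lam ≤ (m : ℝ)) :
    (∃ C > 0, ∀ A : FormalSum (nn + 1) m,
      naturalNorm nn m lam (boundaryL nn m A) ≤ C * naturalNorm (nn + 1) m lam A) ∧
    (∀ A : ℕ → FormalSum (nn + 1) m, NatCauchy (nn + 1) m lam A →
      NatCauchy nn m lam (fun k => boundaryL nn m (A k))) :=
  boundary_bounded_naturalNorm_general nn m hnm lam hl1

end
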